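/- Let a, b > 0 and v ∈ (0, 1) with 1/2 < v < 1. Then (1 − v)a + v·b ≤ v(√a − √b)² − r₁(⁴√(ab) − √a)² + K(⁴√h, 2)^{−r̂₁} · a^{1−v} b^{v}, where h = b/a, r = min{v, 1 − v}, r₁ = min{2r, 1 − 2r} and r̂₁ = min{2r₁, 1 − 2r₁}. -/

import Mathlib

/-!
Write `a = s²` and `b = s² u⁴`, so that `u = h^{1/4}`; both sides are then `s²` times an
inequality in `u` alone. That inequality follows from Zuo's refinement of Young's inequality,
`K(t, 2)^{min λ (1 - λ)} t^λ ≤ λ t + (1 - λ)`, applied at `t = u` with `λ = 3 - 4v` when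
`v ≤ 3/4` and `λ = 4 - 4v` when `v ≥ 3/4`, together with `2c - q ≤ c² / q` for `q > 0`.
-/

/-- The Kantorovich constant `K(t, 2) = (t + 1)^2 / (4 t)`. -/
noncomputable def Kant (t : ℝ) : ℝ := (t + 1) ^ 2 / (4 * t)

open Real

lemma kant_pos {t : ℝ} (ht : 0 < t) : 0 < Kant t := by
  unfold Kant; positivity

lemma kant_inv {t : ℝ} (ht : 0 < t) : Kant t⁻¹ = Kant t := by
  unfold Kant; field_simp; ring

lemma kant_mul_self {t : ℝ} (ht : 0 < t) : Kant t * t = ((t + 1) / 2) ^ 2 := by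
  unfold Kant; field_simp; ring

lemma kant_rpow_mul_rpow_le_of_le_half {t l : ℝ} (ht : 0 < t) (hl0 : 0 ≤ l) (hl : l ≤ 1 / 2) :
    Kant t ^ l * t ^ l ≤ l * t + (1 - l) := by
  have hmean : 0 ≤ (t + 1) / 2 := by positivity
  have hpow : Kant t ^ l * t ^ l = ((t + 1) / 2) ^ (2 * l) := by
    rw [← mul_rpow (kant_pos ht).le ht.le, kant_mul_self ht, ← rpow_natCast, ← rpow_mul hmean]
    norm_num
  have hamgm := geom_mean_le_arith_mean2_weighted (by linarith) (by linarith) hmean zero_le_one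
    (add_sub_cancel (2 * l) 1)
  rw [one_rpow, mul_one] at hamgm
  linarith

lemma kant_rpow_min_mul_rpow_le {t l : ℝ} (ht : 0 < t) (hl0 : 0 ≤ l) (hl1 : l ≤ 1) :
    Kant t ^ min l (1 - l) * t ^ l ≤ l * t + (1 - l) := by
  rcases le_or_gt l (1 / 2) with hl | hl
  · rw [min_eq_left (by linarith)]
    exact kant_rpow_mul_rpow_le_of_le_half ht hl0 hl
  · rw [min_eq_right (by linarith)]
    have hinv := kant_rpow_mul_rpow_le_of_le_half (inv_pos.mpr ht) (by linarith) (by linarith)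
      (l := 1 - l)
    rw [kant_inv ht] at hinv
    have hsplit : t ^ l = t * t⁻¹ ^ (1 - l) := by
      rw [inv_rpow ht.le, ← rpow_neg ht.le, ← rpow_one_add' ht.le (by linarith)]
      ring_nf
    calc Kant t ^ (1 - l) * t ^ l = t * (Kant t ^ (1 - l) * t⁻¹ ^ (1 - l)) := by
          rw [hsplit]; ring
      _ ≤ t * ((1 - l) * t⁻¹ + (1 - (1 - l))) := by gcongr
      _ = l * t + (1 - l) := by field_simp; ring

lemma two_mul_sub_le_sq_mul_kant_rpow {t l : ℝ} (c : ℝ) (ht : 0 < t) (hl0 : 0 ≤ l)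
    (hl1 : l ≤ 1) :
    2 * c - (l * t + (1 - l)) ≤ c ^ 2 * (Kant t ^ (-min l (1 - l)) * t ^ (-l)) := by
  set q := Kant t ^ min l (1 - l) * t ^ l with hq_def
  have hq : 0 < q := mul_pos (rpow_pos_of_pos (kant_pos ht) _) (rpow_pos_of_pos ht _)
  have hzuo : q ≤ l * t + (1 - l) := kant_rpow_min_mul_rpow_le ht hl0 hl1
  have hinv : Kant t ^ (-min l (1 - l)) * t ^ (-l) = q⁻¹ := by
    rw [rpow_neg (kant_pos ht).le, rpow_neg ht.le, hq_def, mul_inv]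
  have hamgm : 2 * c - q ≤ c ^ 2 / q := by
    rw [le_div_iff₀ hq]
    nlinarith [two_mul_le_add_sq c q]
  rw [hinv, ← div_eq_mul_inv]
  linarith

lemma one_sub_add_mul_pow_four_le_of_le_three_div_four {u v : ℝ} (hu : 0 < u) (hv0 : 1 / 2 < v)
    (hv : v ≤ 3 / 4) :
    (1 - v) + v * u ^ 4 ≤ v * (1 - u ^ 2) ^ 2 - (2 * v - 1) * (u - 1) ^ 2
      + Kant u ^ (-min (4 * v - 2) (3 - 4 * v)) * u ^ (4 * v) := by
  have key := two_mul_sub_le_sq_mul_kant_rpow u hu (l := 3 - 4 * v) (by linarith) (by linarith)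
  rw [show 1 - (3 - 4 * v) = 4 * v - 2 by ring, min_comm] at key
  have hpow : u ^ (4 * v) = u ^ 3 * u ^ (-(3 - 4 * v)) := by
    rw [← rpow_natCast, ← rpow_add hu]
    norm_num
  rw [hpow]
  linear_combination u * key

lemma one_sub_add_mul_pow_four_le_of_three_div_four_le {u v : ℝ} (hu : 0 < u) (hv0 : 3 / 4 ≤ v)
    (hv : v < 1) :
    (1 - v) + v * u ^ 4 ≤ v * (1 - u ^ 2) ^ 2 - 2 * (1 - v) * (u - 1) ^ 2
      + Kant u ^ (-min (4 - 4 * v) (4 * v - 3)) * u ^ (4 * v) := by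
  have key := two_mul_sub_le_sq_mul_kant_rpow (u ^ 2) hu (l := 4 - 4 * v) (by linarith)
    (by linarith)
  rw [show 1 - (4 - 4 * v) = 4 * v - 3 by ring] at key
  have hpow : u ^ (4 * v) = u ^ 4 * u ^ (-(4 - 4 * v)) := by
    rw [← rpow_natCast, ← rpow_add hu]
    norm_num
  rw [hpow]
  linear_combination key

lemma one_sub_add_mul_pow_four_le {u v r1 rh1 : ℝ} (hu : 0 < u) (hv0 : 1 / 2 < v) (hv : v < 1)
    (hr1 : r1 = min (2 * (1 - v)) (1 - 2 * (1 - v))) (hrh1 : rh1 = min (2 * r1) (1 - 2 * r1)) :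
    (1 - v) + v * u ^ 4 ≤ v * (1 - u ^ 2) ^ 2 - r1 * (u - 1) ^ 2
      + Kant u ^ (-rh1) * u ^ (4 * v) := by
  subst hr1 hrh1
  rcases le_or_gt v (3 / 4) with hv34 | hv34
  · rw [min_eq_right (by linarith), show 1 - 2 * (1 - v) = 2 * v - 1 by ring,
      show 2 * (2 * v - 1) = 4 * v - 2 by ring, show 1 - (4 * v - 2) = 3 - 4 * v by ring]
    exact one_sub_add_mul_pow_four_le_of_le_three_div_four hu hv0 hv34
  · rw [min_eq_left (by linarith), show 2 * (2 * (1 - v)) = 4 - 4 * v by ring,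
      show 1 - (4 - 4 * v) = 4 * v - 3 by ring]
    exact one_sub_add_mul_pow_four_le_of_three_div_four_le hu hv34.le hv

lemma pow_four_rpow_one_div_four {x : ℝ} (hx : 0 ≤ x) : (x ^ 4) ^ ((1 : ℝ) / 4) = x := by
  rw [← rpow_natCast, ← rpow_mul hx]
  norm_num

theorem stmt_6 (a b v : ℝ) (ha : 0 < a) (hb : 0 < b) (hv0 : 1 / 2 < v) (hv : v < 1)
    (h r r1 rh1 : ℝ) (hh : h = b / a) (hr : r = min v (1 - v))
    (hr1 : r1 = min (2 * r) (1 - 2 * r)) (hrh1 : rh1 = min (2 * r1) (1 - 2 * r1)) :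
    (1 - v) * a + v * b ≤
      v * (Real.sqrt a - Real.sqrt b) ^ 2
        - r1 * ((a * b) ^ ((1 : ℝ) / 4) - Real.sqrt a) ^ 2
        + Kant (h ^ ((1 : ℝ) / 4)) ^ (-rh1) * (a ^ (1 - v) * b ^ v) := by
  subst hh hr
  rw [min_eq_right (by linarith : 1 - v ≤ v)] at hr1
  obtain ⟨s, hs, rfl⟩ : ∃ s, 0 < s ∧ a = s ^ 2 :=
    ⟨√a, sqrt_pos.mpr ha, (sq_sqrt ha.le).symm⟩
  obtain ⟨u, hu, rfl⟩ : ∃ u, 0 < u ∧ b = s ^ 2 * u ^ 4 := by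
    refine ⟨(b / s ^ 2) ^ ((4 : ℕ) : ℝ)⁻¹, by positivity, ?_⟩
    rw [rpow_inv_natCast_pow (by positivity) (by norm_num)]
    field_simp
  have hsqrt_a : √(s ^ 2) = s := sqrt_sq hs.le
  have hsqrt_b : √(s ^ 2 * u ^ 4) = s * u ^ 2 := by
    rw [show s ^ 2 * u ^ 4 = (s * u ^ 2) ^ 2 by ring, sqrt_sq (by positivity)]
  have hroot_ab : (s ^ 2 * (s ^ 2 * u ^ 4)) ^ ((1 : ℝ) / 4) = s * u := by
    rw [show s ^ 2 * (s ^ 2 * u ^ 4) = (s * u) ^ 4 by ring,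
      pow_four_rpow_one_div_four (by positivity)]
  have hroot_h : (s ^ 2 * u ^ 4 / s ^ 2) ^ ((1 : ℝ) / 4) = u := by
    rw [mul_div_cancel_left₀ _ (by positivity), pow_four_rpow_one_div_four hu.le]
  have hgeom : (s ^ 2) ^ (1 - v) * (s ^ 2 * u ^ 4) ^ v = s ^ 2 * u ^ (4 * v) := by
    rw [mul_rpow (by positivity) (by positivity), ← mul_assoc, ← rpow_add (by positivity),
      ← rpow_natCast u 4, ← rpow_mul hu.le]
    norm_num
  rw [hsqrt_a, hsqrt_b, hroot_ab, hroot_h, hgeom]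
  linear_combination s ^ 2 * one_sub_add_mul_pow_four_le hu hv0 hv hr1 hrh1
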